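/- Let q = p^m be a power of a prime p, a ∈ F_{q²} with a^{q+1} = −1, and L an n×n unitary matrix over F_{q²}. Suppose n ≢ 0 (mod p) and n ≢ −2 (mod p), δ = 1, γ ∈ F_{q²} satisfies γ^{q+1} = −3−n with −3−n ≠ 0 in F_{q²}, θ ∈ F_{q²} is nonzero, β = −θ(1+aγ^q)·n^{−1}, α = aθ, and λ = βa. Then the code generated by the bordered matrix H (with first row (θ, β,…,β, α, λ(L₁+⋯+Lₙ)) and (i+1)-st row (δ, (Jₙ+Iₙ)ᵢ, γ, aLᵢ)) is a Hermitian self-dual code of length 2n+2 and dimension n+1. -/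

import Mathlib

open Matrix BigOperators Finset

/-- The Hermitian inner product `x * y = ∑ i, x i * (y i)^q` over `F_{q²}`. -/
def hermInner (q : ℕ) {F : Type} [CommRing F] {ι : Type} [Fintype ι]
    (x y : ι → F) : F :=
  ∑ i, x i * y i ^ q

/-- The Hermitian dual of a set of vectors. -/
def hermDual (q : ℕ) {F : Type} [CommRing F] {ι : Type} [Fintype ι]
    (C : Set (ι → F)) : Set (ι → F) :=
  {y | ∀ x ∈ C, hermInner q x y = 0}

/-- The code generated by a matrix: the span of its rows. -/
def rowSpan {F : Type} [Field F] {k : ℕ} {ι : Type} (G : Matrix (Fin k) ι F) :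
    Submodule F (ι → F) :=
  Submodule.span F (Set.range fun i => G i)

/-!
Write `s = L₁ + ⋯ + Lₙ` and `⟨x, y⟩ = ∑ xᵢ yᵢ^q`. Since `x ↦ x^q` is additive and `L` is
unitary, `⟨Lᵢ, Lⱼ⟩ = δᵢⱼ`, `⟨s, Lᵢ⟩ = 1` and `⟨s, s⟩ = n`; the rows of `Jₙ + Iₙ` have products
`n + 2 + δᵢⱼ`. With `a^{q+1} = -1`, `γ^{q+1} = -3 - n` and `βn = -θ(1 + aγ^q)` the Gram entries
`⟨H₀, H₀⟩`, `⟨H₀, Hᵢ⟩` and `⟨Hᵢ, Hⱼ⟩` (`i, j ≥ 1`) vanish, and `⟨Hᵢ, H₀⟩ = ⟨H₀, Hᵢ⟩^q` since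
`x^{q²} = x`; so the code lies in its dual.

The rows are independent: on the last block rows `1, …, n` restrict to the independent `aLᵢ`,
and the functional `x ↦ γ x₀ - δ x_{n+1}` on the two border columns kills them but not row `0`,
as `θγ - αδ = θ(γ - a) ≠ 0` (`a = γ` would force `n = -2`). Finally `y ↦ y^q` maps the dual
bijectively onto `ker H`, which has dimension `(2n + 2) - (n + 1)`, so the dual has as many
elements as the code.
-/

section Sesquilinear

variable {R : Type} [CommRing R] {ι : Type} [Fintype ι]

theorem hermInner_sum_left (q : ℕ) {κ : Type} (s : Finset κ) (x : κ → ι → R) (y : ι → R) :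
    hermInner q (∑ k ∈ s, x k) y = ∑ k ∈ s, hermInner q (x k) y := by
  simp only [hermInner, Finset.sum_apply, Finset.sum_mul]
  exact Finset.sum_comm

theorem hermInner_smul_left (q : ℕ) (c : R) (x y : ι → R) :
    hermInner q (c • x) y = c * hermInner q x y := by
  simp only [hermInner, Pi.smul_apply, smul_eq_mul, Finset.mul_sum, mul_assoc]

theorem hermInner_sumElim (q : ℕ) {κ : Type} [Fintype κ] (x₁ y₁ : ι → R) (x₂ y₂ : κ → R) :
    hermInner q (Sum.elim x₁ x₂) (Sum.elim y₁ y₂) = hermInner q x₁ y₁ + hermInner q x₂ y₂ :=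
  Fintype.sum_sum_type _

theorem hermInner_const (q : ℕ) (c d : R) :
    hermInner q (fun _ : ι => c) (fun _ => d) = Fintype.card ι * (c * d ^ q) := by
  simp [hermInner]

theorem hermInner_smul_right (q : ℕ) (c : R) (x y : ι → R) :
    hermInner q x (c • y) = c ^ q * hermInner q x y := by
  simp only [hermInner, Pi.smul_apply, smul_eq_mul, mul_pow, Finset.mul_sum]
  exact Finset.sum_congr rfl fun _ _ => by ring

variable {p : ℕ} [ExpChar R p] (m : ℕ)

theorem hermInner_sum_right {κ : Type} (s : Finset κ) (x : ι → R) (y : κ → ι → R) :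
    hermInner (p ^ m) x (∑ k ∈ s, y k) = ∑ k ∈ s, hermInner (p ^ m) x (y k) := by
  simp only [hermInner, Finset.sum_apply, sum_pow_char_pow, Finset.mul_sum]
  exact Finset.sum_comm

theorem hermInner_swap (hconj : ∀ x : R, (x ^ p ^ m) ^ p ^ m = x) (x y : ι → R) :
    hermInner (p ^ m) y x = hermInner (p ^ m) x y ^ p ^ m := by
  simp only [hermInner, sum_pow_char_pow, mul_pow, hconj, mul_comm]

end Sesquilinear

section Unitary

variable {R : Type} [CommRing R] {n : ℕ} {L : Matrix (Fin n) (Fin n) R}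

theorem hermInner_rows_of_unitary {q : ℕ} (hL : L * (L.map (· ^ q))ᵀ = 1) (i j : Fin n) :
    hermInner q (L.row i) (L.row j) = (1 : Matrix (Fin n) (Fin n) R) i j := by
  rw [← hL]
  rfl

theorem hermInner_sum_rows_row_of_unitary {q : ℕ} (hL : L * (L.map (· ^ q))ᵀ = 1) (i : Fin n) :
    hermInner q (∑ k, L.row k) (L.row i) = 1 := by
  simp [hermInner_sum_left, hermInner_rows_of_unitary hL, one_apply]

variable {p : ℕ} [ExpChar R p] {m : ℕ}

theorem hermInner_sum_rows_of_unitary (hL : L * (L.map (· ^ p ^ m))ᵀ = 1) :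
    hermInner (p ^ m) (∑ k, L.row k) (∑ k, L.row k) = n := by
  simp [hermInner_sum_right, hermInner_sum_rows_row_of_unitary hL]

end Unitary

section OnesAddOne

variable {R : Type} [CommRing R]

def onesAddOne (n : ℕ) : Matrix (Fin n) (Fin n) R :=
  Matrix.of fun i j => if i = j then 2 else 1

variable {n : ℕ}

theorem onesAddOne_apply (i j : Fin n) :
    onesAddOne n i j = 1 + (1 : Matrix (Fin n) (Fin n) R) i j := by
  rw [onesAddOne, of_apply, one_apply]
  split_ifs <;> norm_num

variable {p : ℕ} [ExpChar R p] (m : ℕ)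

theorem onesAddOne_apply_pow (i j : Fin n) :
    onesAddOne n i j ^ p ^ m = (onesAddOne n i j : R) := by
  have h2 : (2 : R) ^ p ^ m = 2 := by rw [← iterateFrobenius_def]; exact map_ofNat _ 2
  by_cases h : i = j <;> simp [onesAddOne, h, h2]

theorem hermInner_const_row_onesAddOne (c : R) (i : Fin n) :
    hermInner (p ^ m) (fun _ => c) ((onesAddOne n).row i) = c * (n + 1) := by
  simp only [hermInner, row_apply, onesAddOne_apply_pow]
  simp [← Finset.mul_sum, onesAddOne_apply, Finset.sum_add_distrib, one_apply]

theorem hermInner_rows_onesAddOne (i j : Fin n) :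
    hermInner (p ^ m) ((onesAddOne n).row i) ((onesAddOne n).row j) =
      n + 2 + (1 : Matrix (Fin n) (Fin n) R) i j := by
  simp only [hermInner, row_apply, onesAddOne_apply_pow]
  simp only [onesAddOne_apply, add_mul, mul_add, Finset.sum_add_distrib]
  simp only [mul_one, sum_const, card_univ, Fintype.card_fin, nsmul_eq_mul, one_apply, sum_ite_eq,
    mem_univ, ↓reduceIte, mul_ite, mul_zero]
  ring

end OnesAddOne

section Bordered

variable {R : Type} [CommRing R] {n : ℕ}

def borderedMatrix (θ β α lam δ γ a : R) (L : Matrix (Fin n) (Fin n) R) :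
    Matrix (Fin (n + 1)) ((Unit ⊕ Fin n) ⊕ (Unit ⊕ Fin n)) R :=
  Matrix.of <| Fin.cons
    (Sum.elim (Sum.elim (fun _ => θ) (fun _ => β)) (Sum.elim (fun _ => α) (lam • ∑ k, L.row k)))
    fun i => Sum.elim (Sum.elim (fun _ => δ) ((onesAddOne n).row i))
      (Sum.elim (fun _ => γ) (a • L.row i))

variable (θ β α lam δ γ a : R) (L : Matrix (Fin n) (Fin n) R)

@[simp]
theorem borderedMatrix_zero : borderedMatrix θ β α lam δ γ a L 0 =
    Sum.elim (Sum.elim (fun _ => θ) (fun _ => β)) (Sum.elim (fun _ => α) (lam • ∑ k, L.row k)) :=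
  rfl

@[simp]
theorem borderedMatrix_succ (i : Fin n) : borderedMatrix θ β α lam δ γ a L i.succ =
    Sum.elim (Sum.elim (fun _ => δ) ((onesAddOne n).row i))
      (Sum.elim (fun _ => γ) (a • L.row i)) :=
  rfl

variable {θ β α lam δ γ a} {p : ℕ} [ExpChar R p] {m : ℕ} {L}
  (hL : L * (L.map (· ^ p ^ m))ᵀ = 1)
include hL

theorem hermInner_borderedMatrix_zero_zero :
    hermInner (p ^ m) (borderedMatrix θ β α lam δ γ a L 0)
        (borderedMatrix θ β α lam δ γ a L 0) =
      θ * θ ^ p ^ m + n * (β * β ^ p ^ m) + α * α ^ p ^ m + lam * lam ^ p ^ m * n := by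
  simp only [borderedMatrix_zero, hermInner_sumElim, hermInner_const, Fintype.card_unique,
    Nat.cast_one, one_mul, Fintype.card_fin, hermInner_smul_right, hermInner_smul_left,
    hermInner_sum_rows_of_unitary hL]
  ring

theorem hermInner_borderedMatrix_zero_succ (i : Fin n) :
    hermInner (p ^ m) (borderedMatrix θ β α lam δ γ a L 0)
        (borderedMatrix θ β α lam δ γ a L i.succ) =
      θ * δ ^ p ^ m + β * (n + 1) + α * γ ^ p ^ m + lam * a ^ p ^ m := by
  simp only [borderedMatrix_zero, borderedMatrix_succ, hermInner_sumElim, hermInner_const,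
    Fintype.card_unique, Nat.cast_one, one_mul, hermInner_const_row_onesAddOne,
    hermInner_smul_right, hermInner_smul_left, hermInner_sum_rows_row_of_unitary hL, mul_one]
  ring

theorem hermInner_borderedMatrix_succ_succ (i j : Fin n) :
    hermInner (p ^ m) (borderedMatrix θ β α lam δ γ a L i.succ)
        (borderedMatrix θ β α lam δ γ a L j.succ) =
      δ * δ ^ p ^ m + (n + 2 + (1 : Matrix (Fin n) (Fin n) R) i j) + γ * γ ^ p ^ m +
        a * a ^ p ^ m * (1 : Matrix (Fin n) (Fin n) R) i j := by
  simp only [borderedMatrix_succ, hermInner_sumElim, hermInner_const, Fintype.card_unique,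
    Nat.cast_one, one_mul, hermInner_rows_onesAddOne, hermInner_smul_right, hermInner_smul_left,
    hermInner_rows_of_unitary hL]
  ring

end Bordered

theorem hermInner_borderedMatrix_eq_zero {R : Type} [CommRing R] {p : ℕ} [ExpChar R p] {m n : ℕ}
    {θ β γ a : R} {L : Matrix (Fin n) (Fin n) R} (hL : L * (L.map (· ^ p ^ m))ᵀ = 1)
    (hconj : ∀ x : R, (x ^ p ^ m) ^ p ^ m = x)
    (ha : a * a ^ p ^ m = -1) (hγ : γ * γ ^ p ^ m = -3 - n)
    (hβ : β * n = -θ * (1 + a * γ ^ p ^ m)) (i j : Fin (n + 1)) :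
    hermInner (p ^ m) (borderedMatrix θ β (a * θ) (β * a) 1 γ a L i)
      (borderedMatrix θ β (a * θ) (β * a) 1 γ a L j) = 0 := by
  have zero_succ (i : Fin n) : hermInner (p ^ m) (borderedMatrix θ β (a * θ) (β * a) 1 γ a L 0)
      (borderedMatrix θ β (a * θ) (β * a) 1 γ a L i.succ) = 0 := by
    rw [hermInner_borderedMatrix_zero_succ hL]
    linear_combination hβ + β * ha
  cases i using Fin.cases with
  | zero =>
    cases j using Fin.cases with
    | zero =>
      rw [hermInner_borderedMatrix_zero_zero hL, mul_pow, mul_pow]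
      linear_combination (θ * θ ^ p ^ m + n * β * β ^ p ^ m) * ha
    | succ j => exact zero_succ j
  | succ i =>
    cases j using Fin.cases with
    | zero => rw [hermInner_swap m hconj, zero_succ, zero_pow (expChar_pow_pos R p m).ne']
    | succ j =>
      rw [hermInner_borderedMatrix_succ_succ hL]
      linear_combination hγ + (1 : Matrix (Fin n) (Fin n) R) i j * ha

theorem linearIndependent_rows_borderedMatrix {F : Type} [Field F] {n : ℕ} {θ β α lam δ γ a : F}
    {L : Matrix (Fin n) (Fin n) F} (hL : IsUnit L) (ha : a ≠ 0) (hdet : θ * γ ≠ α * δ) :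
    LinearIndependent F (borderedMatrix θ β α lam δ γ a L).row := by
  set M := borderedMatrix θ β α lam δ γ a L
  have hsucc : LinearIndependent F fun i : Fin n => M i.succ := by
    refine .of_comp (LinearMap.funLeft F F (Sum.inr ∘ Sum.inr)) ?_
    convert (linearIndependent_rows_iff_isUnit.mpr hL).units_smul fun _ => Units.mk0 a ha
    ext i j
    simp [M, LinearMap.funLeft]
  have hzero : M 0 ∉ Submodule.span F (Set.range fun i : Fin n => M i.succ) := by
    let f : (((Unit ⊕ Fin n) ⊕ (Unit ⊕ Fin n)) → F) →ₗ[F] F :=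
      γ • LinearMap.proj (.inl (.inl ())) - δ • LinearMap.proj (.inr (.inl ()))
    have hf : Submodule.span F (Set.range fun i : Fin n => M i.succ) ≤ LinearMap.ker f :=
      Submodule.span_le.mpr <| Set.range_subset_iff.mpr fun i => by simp [f, M, mul_comm]
    intro h
    have h0 := hf h
    simp only [borderedMatrix_zero, LinearMap.mem_ker, LinearMap.sub_apply, LinearMap.smul_apply,
      LinearMap.coe_proj, Function.eval, Sum.elim_inl, smul_eq_mul, Sum.elim_inr, f, M] at h0
    exact hdet (by linear_combination h0)
  exact hsucc.finCons hzero

theorem rowSpan_eq_span_row {F : Type} [Field F] {k : ℕ} {ι : Type} (G : Matrix (Fin k) ι F) :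
    rowSpan G = Submodule.span F (Set.range G.row) :=
  rfl

section SelfDual

variable {F : Type} [Field F] {ι : Type} [Fintype ι] {k : ℕ}

theorem mem_hermDual_rowSpan_iff (q : ℕ) (G : Matrix (Fin k) ι F) (y : ι → F) :
    y ∈ hermDual q (rowSpan G : Set (ι → F)) ↔ ∀ i, hermInner q (G.row i) y = 0 := by
  refine ⟨fun hy i => hy _ (Submodule.subset_span ⟨i, rfl⟩), fun hy x hx => ?_⟩
  rw [SetLike.mem_coe, rowSpan_eq_span_row, Submodule.mem_span_range_iff_exists_fun] at hx
  obtain ⟨c, rfl⟩ := hx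
  simp [hermInner_sum_left, hermInner_smul_left, hy]

variable {p : ℕ} [ExpChar F p] (m : ℕ)

theorem rowSpan_subset_hermDual {G : Matrix (Fin k) ι F}
    (horth : ∀ i j, hermInner (p ^ m) (G.row i) (G.row j) = 0) :
    (rowSpan G : Set (ι → F)) ⊆ hermDual (p ^ m) (rowSpan G) := by
  intro y hy
  rw [SetLike.mem_coe, rowSpan_eq_span_row, Submodule.mem_span_range_iff_exists_fun] at hy
  obtain ⟨c, rfl⟩ := hy
  rw [mem_hermDual_rowSpan_iff]
  intro i
  simp [hermInner_sum_right, hermInner_smul_right, horth]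

theorem ncard_hermDual_rowSpan [Finite F] (G : Matrix (Fin k) ι F) :
    (hermDual (p ^ m) (rowSpan G : Set (ι → F))).ncard =
      Nat.card F ^ (Fintype.card ι - G.rank) := by
  have hfrob : Function.Bijective fun (y : ι → F) i => y i ^ p ^ m := by
    have hinj := (iterateFrobenius_inj F p m).comp_left (α := ι)
    exact ⟨hinj, Finite.surjective_of_injective hinj⟩
  have hdual : hermDual (p ^ m) (rowSpan G : Set (ι → F)) =
      (fun (y : ι → F) i => y i ^ p ^ m) ⁻¹' (LinearMap.ker G.mulVecLin) := by
    ext y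
    simp only [mem_hermDual_rowSpan_iff, Set.mem_preimage, SetLike.mem_coe, LinearMap.mem_ker,
      funext_iff]
    rfl
  have hker := LinearMap.finrank_range_add_finrank_ker G.mulVecLin
  rw [Module.finrank_fintype_fun_eq_card] at hker
  rw [hdual, Set.ncard_preimage_of_injective_subset_range hfrob.1 (by simp [hfrob.2.range_eq]),
    ← Nat.card_coe_set_eq, SetLike.coe_sort_coe, Module.natCard_eq_pow_finrank (K := F),
    Matrix.rank]
  congr 1
  omega

theorem rowSpan_eq_hermDual_of_orthogonal [Finite F] {G : Matrix (Fin k) ι F}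
    (hG : LinearIndependent F G.row) (horth : ∀ i j, hermInner (p ^ m) (G.row i) (G.row j) = 0)
    (hcard : Fintype.card ι = k + k) :
    (rowSpan G : Set (ι → F)) = hermDual (p ^ m) (rowSpan G) := by
  refine Set.eq_of_subset_of_ncard_le (rowSpan_subset_hermDual m horth) ?_ (Set.toFinite _)
  rw [ncard_hermDual_rowSpan, hG.rank_matrix, ← Nat.card_coe_set_eq, SetLike.coe_sort_coe,
    rowSpan_eq_span_row, Module.natCard_eq_pow_finrank (K := F) (V := Submodule.span F _),
    finrank_span_eq_card hG]
  simp [hcard]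

end SelfDual

theorem stmt15_general (p m q n : ℕ) (hp : p.Prime) (hq : q = p ^ m)
    (hnp0 : (n : ZMod p) ≠ 0) (hnp2 : (n : ZMod p) ≠ -2)
    (F : Type) [Field F] [Fintype F] (hF : Fintype.card F = q ^ 2)
    (a : F) (ha : a ^ (q + 1) = -1)
    (L : Matrix (Fin n) (Fin n) F) (hL : L * (L.map (· ^ q))ᵀ = 1)
    (α β γ δ lam θ : F)
    (hδ : δ = 1)
    (hγ : γ ^ (q + 1) = -3 - (n : F))
    (hθ : θ ≠ 0)
    (hβ : β = -θ * (1 + a * γ ^ q) * (n : F)⁻¹)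
    (hα : α = a * θ)
    (hlam : lam = β * a)
    (H : Matrix (Fin (n + 1)) ((Unit ⊕ Fin n) ⊕ (Unit ⊕ Fin n)) F)
    (hH1 : H 0 (Sum.inl (Sum.inl ())) = θ)
    (hH2 : ∀ j, H 0 (Sum.inl (Sum.inr j)) = β)
    (hH3 : H 0 (Sum.inr (Sum.inl ())) = α)
    (hH4 : ∀ j, H 0 (Sum.inr (Sum.inr j)) = lam * ∑ k, L k j)
    (hH5 : ∀ i : Fin n, H i.succ (Sum.inl (Sum.inl ())) = δ)
    (hH6 : ∀ i j : Fin n, H i.succ (Sum.inl (Sum.inr j)) = if j = i then 2 else 1)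
    (hH7 : ∀ i : Fin n, H i.succ (Sum.inr (Sum.inl ())) = γ)
    (hH8 : ∀ i j : Fin n, H i.succ (Sum.inr (Sum.inr j)) = a * L i j) :
    (rowSpan H : Set ((Unit ⊕ Fin n) ⊕ (Unit ⊕ Fin n) → F)) = hermDual q (rowSpan H) ∧
    Module.finrank F (rowSpan H) = n + 1 := by
  have : Fact p.Prime := ⟨hp⟩
  have : CharP F p := charP_of_card_eq_prime_pow (f := m * 2) (by rw [hF, hq, pow_mul])
  have hconj (x : F) : (x ^ q) ^ q = x := by rw [← pow_mul, ← sq, ← hF, FiniteField.pow_card]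
  have hcast := (ZMod.castHom (dvd_refl p) F).injective
  have hn0 : (n : F) ≠ 0 := fun h => hnp0 (hcast (by simpa using h))
  have hn2 : (n : F) ≠ -2 := fun h => hnp2 (hcast (by rw [map_natCast, map_neg, map_ofNat, h]))
  have ha' : a * a ^ q = -1 := by rw [← pow_succ', ha]
  have hγ' : γ * γ ^ q = -3 - n := by rw [← pow_succ', hγ]
  have ha0 : a ≠ 0 := by rintro rfl; simp at ha'
  have hdet : θ * γ ≠ a * θ * 1 := fun h => hn2 <| by
    rw [mul_left_cancel₀ hθ (h.trans (by ring))] at hγ'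
    linear_combination hγ' - ha'
  have hH : H = borderedMatrix θ β (a * θ) (β * a) 1 γ a L := by
    ext i ((_ | j) | (_ | j)) <;> cases i using Fin.cases <;>
      simp [hH1, hH2, hH3, hH4, hH5, hH6, hH7, hH8, hδ, hα, hlam, Finset.sum_apply, onesAddOne,
        eq_comm]
  subst hq hH
  have hind := linearIndependent_rows_borderedMatrix (β := β) (lam := β * a)
    ((Matrix.isUnit_iff_isUnit_det L).mpr (isUnit_det_of_right_inverse hL)) ha0 hdet
  have hβ' : β * n = -θ * (1 + a * γ ^ p ^ m) := by rw [hβ]; field_simp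
  have horth := hermInner_borderedMatrix_eq_zero hL hconj ha' hγ' hβ'
  have hcard : Fintype.card ((Unit ⊕ Fin n) ⊕ (Unit ⊕ Fin n)) = (n + 1) + (n + 1) := by
    simp only [Fintype.card_sum, Fintype.card_unique, Fintype.card_fin]
    omega
  refine ⟨rowSpan_eq_hermDual_of_orthogonal m hind horth hcard, ?_⟩
  rw [rowSpan_eq_span_row, finrank_span_eq_card hind, Fintype.card_fin]

/-- Theorem 4, case 4) of the paper. With `n ≢ 0` and `n ≢ -2 (mod p)`,
`δ = 1`, `γ^{q+1} = -3 - n ≠ 0`, `θ ≠ 0`, `β = -θ(1 + aγ^q)·n⁻¹`, `α = aθ`,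
`λ = βa`, the bordered matrix `H` (with `Jₙ + Iₙ`) generates a Hermitian
self-dual code of length `2n+2` and dimension `n+1`. -/
theorem stmt15 (p m q n : ℕ) (hp : p.Prime) (hm : 0 < m) (hq : q = p ^ m)
    (hnp0 : (n : ZMod p) ≠ 0) (hnp2 : (n : ZMod p) ≠ -2)
    (F : Type) [Field F] [Fintype F] (hF : Fintype.card F = q ^ 2)
    (a : F) (ha : a ^ (q + 1) = -1)
    (L : Matrix (Fin n) (Fin n) F) (hL : L * (L.map (· ^ q))ᵀ = 1)
    (α β γ δ lam θ : F)
    (hδ : δ = 1)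
    (hγ : γ ^ (q + 1) = -3 - (n : F)) (hγ0 : (-3 : F) - (n : F) ≠ 0)
    (hθ : θ ≠ 0)
    (hβ : β = -θ * (1 + a * γ ^ q) * (n : F)⁻¹)
    (hα : α = a * θ)
    (hlam : lam = β * a)
    (H : Matrix (Fin (n + 1)) ((Unit ⊕ Fin n) ⊕ (Unit ⊕ Fin n)) F)
    (hH1 : H 0 (Sum.inl (Sum.inl ())) = θ)
    (hH2 : ∀ j, H 0 (Sum.inl (Sum.inr j)) = β)
    (hH3 : H 0 (Sum.inr (Sum.inl ())) = α)
    (hH4 : ∀ j, H 0 (Sum.inr (Sum.inr j)) = lam * ∑ k, L k j)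
    (hH5 : ∀ i : Fin n, H i.succ (Sum.inl (Sum.inl ())) = δ)
    (hH6 : ∀ i j : Fin n, H i.succ (Sum.inl (Sum.inr j)) = if j = i then 2 else 1)
    (hH7 : ∀ i : Fin n, H i.succ (Sum.inr (Sum.inl ())) = γ)
    (hH8 : ∀ i j : Fin n, H i.succ (Sum.inr (Sum.inr j)) = a * L i j) :
    (rowSpan H : Set ((Unit ⊕ Fin n) ⊕ (Unit ⊕ Fin n) → F)) = hermDual q (rowSpan H) ∧
    Module.finrank F (rowSpan H) = n + 1 :=
  stmt15_general p m q n hp hq hnp0 hnp2 F hF a ha L hL α β γ δ lam θ hδ hγ hθ hβ hα hlam H hH1 hH2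
    hH3 hH4 hH5 hH6 hH7 hH8
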